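/- arXiv:math/9904122 — 2 statements merged into one kernel-verified Lean document; each statement's English description precedes it below -/
import Mathlib

section
/- Let C₁, C₂ be n×n real matrices. Then the third-order Taylor coefficient of the discrepancy of the Strang splitting satisfies: the function t ↦ e^{tC₂/2} e^{tC₁} e^{tC₂/2} − exp(t(C₁+C₂) + (t³/12)[C₁ + ½C₂, [C₁, C₂]]) is O(t⁴) as t → 0. -/
open Matrix NormedSpace

section Cub
variable {R : Type*} [Ring R] [Algebra ℝ R]

/-- Cubic Taylor polynomial of `exp`. -/
noncomputable def cub (x : R) : R := 1 + x + (1/2 : ℝ) • x ^ 2 + (1/6 : ℝ) • x ^ 3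

/-- The explicit `t⁴`-quotient of the Strang-splitting discrepancy of the cubic
truncations. -/
noncomputable def Eterm (t : ℝ) (c1 c2 : R) : R :=
  ((1 / 12 : ℝ)) • (c1 * (c1 * (c1 * c2))) +
    ((1 / 16 : ℝ)) • (c1 * (c1 * (c2 * c2))) +
    ((1 / 48 : ℝ)) • (c1 * (c2 * (c2 * c2))) +
    ((1 / 12 : ℝ)) • (c2 * (c1 * (c1 * c1))) +
    ((1 / 8 : ℝ)) • (c2 * (c1 * (c1 * c2))) +
    ((1 / 16 : ℝ)) • (c2 * (c1 * (c2 * c2))) +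
    ((1 / 16 : ℝ)) • (c2 * (c2 * (c1 * c1))) +
    ((1 / 16 : ℝ)) • (c2 * (c2 * (c1 * c2))) +
    ((1 / 48 : ℝ)) • (c2 * (c2 * (c2 * c1))) +
    ((7 / 192 : ℝ)) • (c2 * (c2 * (c2 * c2))) +
    (t ^ 1 * (1 / 48 : ℝ)) • (c1 * (c1 * (c1 * (c2 * c2)))) +
    (t ^ 1 * (1 / 96 : ℝ)) • (c1 * (c1 * (c2 * (c2 * c2)))) +
    (t ^ 1 * (1 / 24 : ℝ)) • (c2 * (c1 * (c1 * (c1 * c2)))) +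
    (t ^ 1 * (1 / 32 : ℝ)) • (c2 * (c1 * (c1 * (c2 * c2)))) +
    (t ^ 1 * (1 / 96 : ℝ)) • (c2 * (c1 * (c2 * (c2 * c2)))) +
    (t ^ 1 * (1 / 48 : ℝ)) • (c2 * (c2 * (c1 * (c1 * c1)))) +
    (t ^ 1 * (1 / 32 : ℝ)) • (c2 * (c2 * (c1 * (c1 * c2)))) +
    (t ^ 1 * (1 / 64 : ℝ)) • (c2 * (c2 * (c1 * (c2 * c2)))) +
    (t ^ 1 * (1 / 96 : ℝ)) • (c2 * (c2 * (c2 * (c1 * c1)))) +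
    (t ^ 1 * (1 / 96 : ℝ)) • (c2 * (c2 * (c2 * (c1 * c2)))) +
    (t ^ 1 * (1 / 192 : ℝ)) • (c2 * (c2 * (c2 * (c2 * c2)))) +
    (t ^ 2 * (1 / 288 : ℝ)) • (c1 * (c1 * (c1 * (c2 * (c2 * c2))))) +
    (t ^ 2 * (1 / 96 : ℝ)) • (c2 * (c1 * (c1 * (c1 * (c2 * c2))))) +
    (t ^ 2 * (1 / 192 : ℝ)) • (c2 * (c1 * (c1 * (c2 * (c2 * c2))))) +
    (t ^ 2 * (1 / 96 : ℝ)) • (c2 * (c2 * (c1 * (c1 * (c1 * c2))))) +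
    (t ^ 2 * (1 / 128 : ℝ)) • (c2 * (c2 * (c1 * (c1 * (c2 * c2))))) +
    (t ^ 2 * (1 / 384 : ℝ)) • (c2 * (c2 * (c1 * (c2 * (c2 * c2))))) +
    (t ^ 2 * (1 / 288 : ℝ)) • (c2 * (c2 * (c2 * (c1 * (c1 * c1))))) +
    (t ^ 2 * (1 / 192 : ℝ)) • (c2 * (c2 * (c2 * (c1 * (c1 * c2))))) +
    (t ^ 2 * (1 / 384 : ℝ)) • (c2 * (c2 * (c2 * (c1 * (c2 * c2))))) +
    (t ^ 2 * (1 / 2304 : ℝ)) • (c2 * (c2 * (c2 * (c2 * (c2 * c2))))) +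
    (t ^ 3 * (1 / 576 : ℝ)) • (c2 * (c1 * (c1 * (c1 * (c2 * (c2 * c2)))))) +
    (t ^ 3 * (1 / 384 : ℝ)) • (c2 * (c2 * (c1 * (c1 * (c1 * (c2 * c2)))))) +
    (t ^ 3 * (1 / 768 : ℝ)) • (c2 * (c2 * (c1 * (c1 * (c2 * (c2 * c2)))))) +
    (t ^ 3 * (1 / 576 : ℝ)) • (c2 * (c2 * (c2 * (c1 * (c1 * (c1 * c2)))))) +
    (t ^ 3 * (1 / 768 : ℝ)) • (c2 * (c2 * (c2 * (c1 * (c1 * (c2 * c2)))))) +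
    (t ^ 3 * (1 / 2304 : ℝ)) • (c2 * (c2 * (c2 * (c1 * (c2 * (c2 * c2)))))) +
    (t ^ 4 * (1 / 2304 : ℝ)) • (c2 * (c2 * (c1 * (c1 * (c1 * (c2 * (c2 * c2))))))) +
    (t ^ 4 * (1 / 2304 : ℝ)) • (c2 * (c2 * (c2 * (c1 * (c1 * (c1 * (c2 * c2))))))) +
    (t ^ 4 * (1 / 4608 : ℝ)) • (c2 * (c2 * (c2 * (c1 * (c1 * (c2 * (c2 * c2))))))) +
    (t ^ 5 * (1 / 13824 : ℝ)) • (c2 * (c2 * (c2 * (c1 * (c1 * (c1 * (c2 * (c2 * c2))))))))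

lemma key_identity (t : ℝ) (c1 c2 : R) :
    cub ((t / 2) • c2) * cub (t • c1) * cub ((t / 2) • c2)
      - (cub (t • (c1 + c2)) + (t ^ 3 / 12) • ⁅c1 + (1 / 2 : ℝ) • c2, ⁅c1, c2⁆⁆)
      = t ^ 4 • Eterm t c1 c2 := by
  simp only [cub, Eterm, Ring.lie_def, pow_succ, pow_zero, one_mul,
    mul_add, add_mul, sub_mul, mul_sub, smul_add, smul_sub, smul_smul,
    smul_mul_assoc, mul_smul_comm, mul_one, mul_assoc]
  match_scalars <;> ring

end Cub

section TopCont
variable {R : Type*} [NormedRing R] [NormedAlgebra ℝ R]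

lemma continuous_Eterm (c1 c2 : R) : Continuous fun t : ℝ => Eterm t c1 c2 := by
  unfold Eterm
  fun_prop

end TopCont

section Decomp
variable {R : Type*} [Ring R]

lemma decomp (ea eb eA ca cb cu cA w q : R)
    (hkey : ca * cb * ca - (cu + w) = q) :
    ea * eb * ea - eA
      = (ea - ca) * (eb * ea) + ca * ((eb - cb) * ea) + (ca * cb) * (ea - ca)
        + q + ((cu + w) - cA) + (cA - eA) := by
  rw [← hkey]; noncomm_ring

lemma sq_diff (u v : R) : (u + v) ^ 2 - u ^ 2 = (u + v) * v + v * u := by noncomm_ring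

lemma cu_diff (u v : R) :
    (u + v) ^ 3 - u ^ 3 = (u + v) ^ 2 * v + (u + v) * (v * u) + v * u ^ 2 := by noncomm_ring

end Decomp

section Cub2
variable {R : Type*} [Ring R] [Algebra ℝ R]

lemma cub_diff (u v : R) : (cub u + v) - cub (u + v)
    = -((1/2 : ℝ) • ((u + v) ^ 2 - u ^ 2) + (1/6 : ℝ) • ((u + v) ^ 3 - u ^ 3)) := by
  simp only [cub]
  module

end Cub2

section BA
set_option linter.unusedSectionVars false
variable {A : Type*} [NormedRing A] [NormOneClass A] [NormedAlgebra ℝ A] [CompleteSpace A]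

lemma term_norm_le (x : A) (n : ℕ) :
    ‖((Nat.factorial n : ℝ))⁻¹ • x ^ n‖ ≤ ‖x‖ ^ n / Nat.factorial n := by
  rw [norm_smul, norm_inv, Real.norm_natCast, div_eq_inv_mul]
  gcongr
  exact norm_pow_le x n

lemma my_norm_exp_le (x : A) : ‖NormedSpace.exp x‖ ≤ Real.exp ‖x‖ := by
  rw [exp_eq_tsum ℝ]
  refine (norm_tsum_le_tsum_norm (norm_expSeries_summable' (𝕂 := ℝ) x)).trans ?_
  rw [Real.exp_eq_exp_ℝ, exp_eq_tsum_div]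
  exact Summable.tsum_le_tsum (term_norm_le x) (norm_expSeries_summable' (𝕂 := ℝ) x)
    (Real.summable_pow_div_factorial ‖x‖)

lemma exp_sub_cub (x : A) : ‖NormedSpace.exp x - cub x‖ ≤ ‖x‖ ^ 4 * Real.exp ‖x‖ := by
  have hsum := expSeries_summable' (𝕂 := ℝ) x
  have htail := Summable.sum_add_tsum_nat_add 4 hsum
  have hhead : ∑ i ∈ Finset.range 4, ((Nat.factorial i : ℝ))⁻¹ • x ^ i = cub x := by
    simp [Finset.sum_range_succ, cub, Nat.factorial]
  have hexp : NormedSpace.exp x - cub x = ∑' i : ℕ, ((Nat.factorial (i + 4) : ℝ))⁻¹ • x ^ (i + 4) := by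
    simp only [exp_eq_tsum ℝ]
    rw [← htail, hhead]
    abel
  rw [hexp]
  have hs1 : Summable fun i : ℕ => ‖((Nat.factorial (i + 4) : ℝ))⁻¹ • x ^ (i + 4)‖ :=
    ((norm_expSeries_summable' (𝕂 := ℝ) x).comp_injective (add_left_injective 4))
  have hs2 : Summable fun i : ℕ => ‖x‖ ^ 4 * (‖x‖ ^ i / Nat.factorial i) :=
    (Real.summable_pow_div_factorial ‖x‖).mul_left _
  refine (norm_tsum_le_tsum_norm hs1).trans ?_
  refine (Summable.tsum_le_tsum (fun i => ?_) hs1 hs2).trans ?_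
  · calc ‖((Nat.factorial (i + 4) : ℝ))⁻¹ • x ^ (i + 4)‖
        ≤ ‖x‖ ^ (i + 4) / Nat.factorial (i + 4) := term_norm_le x (i + 4)
      _ = ‖x‖ ^ 4 * (‖x‖ ^ i * ((Nat.factorial (i + 4) : ℝ))⁻¹) := by rw [pow_add]; ring
      _ ≤ ‖x‖ ^ 4 * (‖x‖ ^ i * ((Nat.factorial i : ℝ))⁻¹) := by
        gcongr
        omega
      _ = ‖x‖ ^ 4 * (‖x‖ ^ i / Nat.factorial i) := by rw [div_eq_mul_inv]
  · rw [tsum_mul_left, Real.exp_eq_exp_ℝ, exp_eq_tsum_div]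

lemma norm_cub_le {x : A} (hx : ‖x‖ ≤ 1) : ‖cub x‖ ≤ 3 := by
  have h2 : ‖x ^ 2‖ ≤ 1 := (norm_pow_le x 2).trans (pow_le_one₀ (norm_nonneg x) hx)
  have h3 : ‖x ^ 3‖ ≤ 1 := (norm_pow_le x 3).trans (pow_le_one₀ (norm_nonneg x) hx)
  have k1 := norm_add_le (1 + x + (1/2 : ℝ) • x ^ 2) ((1/6 : ℝ) • x ^ 3)
  have k2 := norm_add_le (1 + x) ((1/2 : ℝ) • x ^ 2)
  have k3 := norm_add_le (1 : A) x
  have k4 : ‖(1/2 : ℝ) • x ^ 2‖ = (1/2) * ‖x ^ 2‖ := by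
    rw [norm_smul, Real.norm_eq_abs]; norm_num
  have k5 : ‖(1/6 : ℝ) • x ^ 3‖ = (1/6) * ‖x ^ 3‖ := by
    rw [norm_smul, Real.norm_eq_abs]; norm_num
  have k6 : ‖(1 : A)‖ = 1 := norm_one
  unfold cub
  linarith

attribute [irreducible] Eterm cub

set_option maxHeartbeats 2000000 in
theorem strang_banach (c1 c2 : A) :
    ∃ M δ : ℝ, 0 < M ∧ 0 < δ ∧ ∀ t : ℝ, |t| ≤ δ →
      ‖NormedSpace.exp ((t / 2) • c2) * NormedSpace.exp (t • c1) * NormedSpace.exp ((t / 2) • c2) -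
          NormedSpace.exp (t • (c1 + c2) + (t ^ 3 / 12) • ⁅c1 + (1 / 2 : ℝ) • c2, ⁅c1, c2⁆⁆)‖ ≤
        M * |t| ^ 4 := by
  obtain ⟨CE, hCE⟩ := (isCompact_Icc (a := (-1 : ℝ)) (b := 1)).exists_bound_of_continuousOn
    (continuous_Eterm c1 c2).continuousOn
  set d : A := ⁅c1 + (1 / 2 : ℝ) • c2, ⁅c1, c2⁆⁆ with hd
  set K : ℝ := ‖c1‖ + ‖c2‖ + ‖d‖ + 1 with hK
  have hn1 := norm_nonneg c1
  have hn2 := norm_nonneg c2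
  have hnd := norm_nonneg d
  have hK1 : 1 ≤ K := by rw [hK]; linarith
  have hK0 : 0 < K := lt_of_lt_of_le one_pos hK1
  refine ⟨500 * K ^ 4 + max CE 0 + 1, min 1 K⁻¹, by positivity, by positivity, fun t ht => ?_⟩
  have hta := abs_nonneg t
  have ht1 : |t| ≤ 1 := le_trans ht (min_le_left _ _)
  have htK : K * |t| ≤ 1 := by
    have h2 : |t| ≤ K⁻¹ := le_trans ht (min_le_right _ _)
    calc K * |t| ≤ K * K⁻¹ := by gcongr
      _ = 1 := mul_inv_cancel₀ (ne_of_gt hK0)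
  have ht3 : |t| ^ 3 ≤ |t| := pow_le_of_le_one hta ht1 (by norm_num)
  set X : ℝ := K * |t| with hX
  have hX0 : 0 ≤ X := by positivity
  have hX1 : X ≤ 1 := htK
  set a : A := (t / 2) • c2 with ha
  set b : A := t • c1 with hb
  set u : A := t • (c1 + c2) with hu
  set v : A := (t ^ 3 / 12) • d with hv
  -- norm bounds on the building blocks
  have hna : ‖a‖ ≤ X := by
    rw [ha, norm_smul, Real.norm_eq_abs, abs_div, hX, hK]
    have h2 : |(2 : ℝ)| = 2 := by norm_num
    rw [h2]
    nlinarith [mul_nonneg hta hn1, mul_nonneg hta hn2, mul_nonneg hta hnd]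
  have hnb : ‖b‖ ≤ X := by
    rw [hb, norm_smul, Real.norm_eq_abs, hX, hK]
    nlinarith [mul_nonneg hta hn1, mul_nonneg hta hn2, mul_nonneg hta hnd]
  have hnv : ‖v‖ ≤ K * |t| ^ 3 := by
    rw [hv, norm_smul, Real.norm_eq_abs, abs_div, abs_pow, hK]
    have h12 : |(12 : ℝ)| = 12 := by norm_num
    rw [h12]
    have h3 : (0:ℝ) ≤ |t| ^ 3 := by positivity
    nlinarith [mul_nonneg h3 hn1, mul_nonneg h3 hn2, mul_nonneg h3 hnd]
  have hnu : ‖u‖ ≤ X := by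
    rw [hu, norm_smul, Real.norm_eq_abs, hX, hK]
    have h := mul_le_mul_of_nonneg_left (norm_add_le c1 c2) hta
    nlinarith [mul_nonneg hta hn1, mul_nonneg hta hn2, mul_nonneg hta hnd]
  have hnA : ‖u + v‖ ≤ X := by
    have h1 : ‖u‖ ≤ |t| * (‖c1‖ + ‖c2‖) := by
      rw [hu, norm_smul, Real.norm_eq_abs]
      exact mul_le_mul_of_nonneg_left (norm_add_le _ _) hta
    have h2 : ‖v‖ ≤ |t| * ‖d‖ := by
      rw [hv, norm_smul, Real.norm_eq_abs, abs_div, abs_pow]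
      have h12 : |(12 : ℝ)| = 12 := by norm_num
      rw [h12]
      nlinarith [mul_nonneg (by linarith : (0:ℝ) ≤ |t| - |t| ^ 3) hnd, mul_nonneg hta hnd]
    refine (norm_add_le u v).trans ?_
    rw [hX, hK]
    nlinarith [h1, h2]
  set Y : ℝ := K * |t| ^ 3 with hY
  have hY0 : 0 ≤ Y := by positivity
  have hXY : X * Y = K ^ 2 * |t| ^ 4 := by rw [hX, hY]; ring
  have hX4 : X ^ 4 = K ^ 4 * |t| ^ 4 := by rw [hX]; ring
  clear_value d K X Y a b u v
  have ha1 : ‖a‖ ≤ 1 := hna.trans hX1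
  have hb1 : ‖b‖ ≤ 1 := hnb.trans hX1
  have hA1 : ‖u + v‖ ≤ 1 := hnA.trans hX1
  -- uniform bounds for exp and cub
  have he3 : Real.exp 1 ≤ 3 := (Real.exp_one_lt_d9.le).trans (by norm_num)
  have hexp3 : ∀ x : A, ‖x‖ ≤ 1 → ‖NormedSpace.exp x‖ ≤ 3 := fun x hx =>
    (my_norm_exp_le x).trans ((Real.exp_le_exp.mpr hx).trans he3)
  have hrx : ∀ x : A, ‖x‖ ≤ 1 → ‖NormedSpace.exp x - cub x‖ ≤ 3 * ‖x‖ ^ 4 := fun x hx => by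
    refine (exp_sub_cub x).trans ?_
    rw [mul_comm]
    gcongr
    exact (Real.exp_le_exp.mpr hx).trans he3
  have hm : ∀ (x y : A) (bx by' : ℝ), ‖x‖ ≤ bx → ‖y‖ ≤ by' → ‖x * y‖ ≤ bx * by' :=
    fun x y bx by' hx hy =>
      (norm_mul_le x y).trans (mul_le_mul hx hy (norm_nonneg _) ((norm_nonneg _).trans hx))
  -- fold the key identity
  have hkey := key_identity t c1 c2
  rw [← hd, ← ha, ← hb, ← hu, ← hv] at hkey
  -- the decomposition
  have hdec := decomp (NormedSpace.exp a) (NormedSpace.exp b) (NormedSpace.exp (u + v)) (cub a) (cub b) (cub u)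
    (cub (u + v)) v (t ^ 4 • Eterm t c1 c2) hkey
  clear hkey
  -- bounds for the six pieces
  have hra : ‖NormedSpace.exp a - cub a‖ ≤ 3 * X ^ 4 := by
    refine (hrx a ha1).trans ?_
    gcongr
  have hrb : ‖NormedSpace.exp b - cub b‖ ≤ 3 * X ^ 4 := by
    refine (hrx b hb1).trans ?_
    gcongr
  have b1 : ‖(NormedSpace.exp a - cub a) * (NormedSpace.exp b * NormedSpace.exp a)‖ ≤ 27 * X ^ 4 := by
    calc ‖(NormedSpace.exp a - cub a) * (NormedSpace.exp b * NormedSpace.exp a)‖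
        ≤ (3 * X ^ 4) * (3 * 3) :=
          hm _ _ _ _ hra (hm _ _ _ _ (hexp3 b hb1) (hexp3 a ha1))
      _ = 27 * X ^ 4 := by ring
  have b2 : ‖cub a * ((NormedSpace.exp b - cub b) * NormedSpace.exp a)‖ ≤ 27 * X ^ 4 := by
    calc ‖cub a * ((NormedSpace.exp b - cub b) * NormedSpace.exp a)‖
        ≤ 3 * ((3 * X ^ 4) * 3) :=
          hm _ _ _ _ (norm_cub_le ha1) (hm _ _ _ _ hrb (hexp3 a ha1))
      _ = 27 * X ^ 4 := by ring
  have b3 : ‖(cub a * cub b) * (NormedSpace.exp a - cub a)‖ ≤ 27 * X ^ 4 := by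
    calc ‖(cub a * cub b) * (NormedSpace.exp a - cub a)‖
        ≤ (3 * 3) * (3 * X ^ 4) :=
          hm _ _ _ _ (hm _ _ _ _ (norm_cub_le ha1) (norm_cub_le hb1)) hra
      _ = 27 * X ^ 4 := by ring
  have b4 : ‖t ^ 4 • Eterm t c1 c2‖ ≤ max CE 0 * |t| ^ 4 := by
    rw [norm_smul, Real.norm_eq_abs, abs_pow, mul_comm]
    gcongr
    exact (hCE t (Set.mem_Icc.mpr (abs_le.mp ht1))).trans (le_max_left _ _)
  have hAa := cub_diff u v
  have hsq := sq_diff u v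
  have hcu := cu_diff u v
  have b5 : ‖(cub u + v) - cub (u + v)‖ ≤ 2 * (X * Y) := by
    rw [hAa, norm_neg]
    have hq2 : ‖(u + v) ^ 2 - u ^ 2‖ ≤ 2 * (X * Y) := by
      rw [hsq]
      refine (norm_add_le _ _).trans ?_
      have g1 := hm (u + v) v X Y hnA hnv
      have g2 := hm v u Y X hnv hnu
      have hYX : Y * X = X * Y := mul_comm _ _
      linarith [g1, g2, hYX]
    have hq3 : ‖(u + v) ^ 3 - u ^ 3‖ ≤ 3 * (X * Y) := by
      rw [hcu]
      have gsq : ‖(u + v) ^ 2‖ ≤ X := by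
        rw [pow_two]
        refine (hm (u + v) (u + v) X X hnA hnA).trans ?_
        calc X * X ≤ 1 * X := mul_le_mul_of_nonneg_right hX1 hX0
          _ = X := one_mul X
      have gsu : ‖u ^ 2‖ ≤ X := by
        rw [pow_two]
        refine (hm u u X X hnu hnu).trans ?_
        calc X * X ≤ 1 * X := mul_le_mul_of_nonneg_right hX1 hX0
          _ = X := one_mul X
      have g1 := hm ((u + v) ^ 2) v X Y gsq hnv
      have g2 := hm (u + v) (v * u) X (Y * X) hnA (hm v u Y X hnv hnu)
      have g3 := hm v (u ^ 2) Y X hnv gsu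
      have n1 := norm_add_le ((u + v) ^ 2 * v + (u + v) * (v * u)) (v * u ^ 2)
      have n2 := norm_add_le ((u + v) ^ 2 * v) ((u + v) * (v * u))
      have hYX1 : Y * X ≤ Y := by
        calc Y * X ≤ Y * 1 := mul_le_mul_of_nonneg_left hX1 hY0
          _ = Y := mul_one Y
      have h5 : X * (Y * X) ≤ X * Y := mul_le_mul_of_nonneg_left hYX1 hX0
      have hYX : Y * X = X * Y := mul_comm _ _
      linarith [g1, g2, g3, n1, n2, h5, hYX]
    refine (norm_add_le _ _).trans ?_
    rw [norm_smul, norm_smul, Real.norm_eq_abs, Real.norm_eq_abs]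
    have h2 : |(1/2 : ℝ)| = 1/2 := by norm_num
    have h6 : |(1/6 : ℝ)| = 1/6 := by norm_num
    rw [h2, h6]
    linarith [hq2, hq3, mul_nonneg hX0 hY0]
  have b6 : ‖cub (u + v) - NormedSpace.exp (u + v)‖ ≤ 3 * X ^ 4 := by
    rw [norm_sub_rev]
    refine (hrx _ hA1).trans ?_
    gcongr
  -- assemble
  have norm_add6 : ∀ y1 y2 y3 y4 y5 y6 : A,
      ‖y1 + y2 + y3 + y4 + y5 + y6‖ ≤ ‖y1‖ + ‖y2‖ + ‖y3‖ + ‖y4‖ + ‖y5‖ + ‖y6‖ := by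
    intro y1 y2 y3 y4 y5 y6
    have h1 := norm_add_le (y1 + y2 + y3 + y4 + y5) y6
    have h2 := norm_add_le (y1 + y2 + y3 + y4) y5
    have h3 := norm_add_le (y1 + y2 + y3) y4
    have h4 := norm_add_le (y1 + y2) y3
    have h5 := norm_add_le y1 y2
    linarith
  rw [hdec]
  refine (norm_add6 _ _ _ _ _ _).trans ?_
  have e3 : (0:ℝ) ≤ |t| ^ 4 := by positivity
  have e4 : 1 ≤ K ^ 4 := one_le_pow₀ hK1
  have e6 : K ^ 2 ≤ K ^ 4 := pow_le_pow_right₀ hK1 (by norm_num)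
  have e7 : K ^ 2 * |t| ^ 4 ≤ K ^ 4 * |t| ^ 4 := mul_le_mul_of_nonneg_right e6 e3
  have e8 : |t| ^ 4 ≤ K ^ 4 * |t| ^ 4 := by
    calc |t| ^ 4 = 1 * |t| ^ 4 := (one_mul _).symm
      _ ≤ K ^ 4 * |t| ^ 4 := mul_le_mul_of_nonneg_right e4 e3
  have egoal : (500 * K ^ 4 + max CE 0 + 1) * |t| ^ 4
      = 500 * (K ^ 4 * |t| ^ 4) + max CE 0 * |t| ^ 4 + |t| ^ 4 := by ring
  linarith [b1, b2, b3, b4, b5, b6, hX4, hXY, egoal, e7, e8, e3]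

end BA

section Bridge

attribute [local instance] Matrix.linftyOpSemiNormedRing

lemma entry_le_linfty {n : ℕ} (Y : Matrix (Fin n) (Fin n) ℝ) (i j : Fin n) :
    ‖Y i j‖ ≤ ‖Y‖ := by
  have h : ‖Y i j‖₊ ≤ ‖Y‖₊ := by
    rw [Matrix.linfty_opNNNorm_def]
    calc ‖Y i j‖₊ ≤ ∑ k, ‖Y i k‖₊ :=
          Finset.single_le_sum (f := fun k => ‖Y i k‖₊) (fun _ _ => zero_le) (Finset.mem_univ j)
      _ ≤ _ := Finset.le_sup (f := fun r => ∑ k, ‖Y r k‖₊) (Finset.mem_univ i)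
  exact_mod_cast h

end Bridge

attribute [local instance] Matrix.normedAddCommGroup

/-- Leading error term of the Strang splitting:
`e^{tC₂/2} e^{tC₁} e^{tC₂/2} - exp(t(C₁+C₂) + (t³/12)[C₁ + ½C₂, [C₁, C₂]]) = O(t⁴)`. -/
theorem stmt13 (n : ℕ) (C1 C2 : Matrix (Fin n) (Fin n) ℝ) :
    ∃ M δ : ℝ, 0 < M ∧ 0 < δ ∧ ∀ t : ℝ, |t| ≤ δ →
      ‖NormedSpace.exp ((t / 2) • C2) * NormedSpace.exp (t • C1) * NormedSpace.exp ((t / 2) • C2) -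
          NormedSpace.exp (t • (C1 + C2) + (t ^ 3 / 12) • ⁅C1 + (1 / 2 : ℝ) • C2, ⁅C1, C2⁆⁆)‖ ≤
        M * |t| ^ 4 := by
  rcases Nat.eq_zero_or_pos n with hn | hn
  · subst hn
    refine ⟨1, 1, one_pos, one_pos, fun t ht => ?_⟩
    have h0 : NormedSpace.exp ((t / 2) • C2) * NormedSpace.exp (t • C1) * NormedSpace.exp ((t / 2) • C2) -
        NormedSpace.exp (t • (C1 + C2) + (t ^ 3 / 12) • ⁅C1 + (1 / 2 : ℝ) • C2, ⁅C1, C2⁆⁆) = 0 :=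
      Subsingleton.elim _ _
    rw [h0, norm_zero]
    positivity
  · haveI : Nonempty (Fin n) := ⟨⟨0, hn⟩⟩
    letI : SeminormedRing (Matrix (Fin n) (Fin n) ℝ) := Matrix.linftyOpSemiNormedRing
    letI : NormedRing (Matrix (Fin n) (Fin n) ℝ) := Matrix.linftyOpNormedRing
    letI : NormedAlgebra ℝ (Matrix (Fin n) (Fin n) ℝ) := Matrix.linftyOpNormedAlgebra
    haveI : NormOneClass (Matrix (Fin n) (Fin n) ℝ) := Matrix.linfty_opNormOneClass
    obtain ⟨M, δ, hM, hδ, h⟩ := @strang_banach _ _ _ _ (FiniteDimensional.complete ℝ _) C1 C2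
    refine ⟨M, δ, hM, hδ, fun t ht => ?_⟩
    refine le_trans ?_ (h t ht)
    exact (Matrix.norm_le_iff (norm_nonneg _)).mpr fun i j => entry_le_linfty _ i j
end

section
/- Let V₁,…,V_d be linearly independent n×n matrices, B = Σ_i β_i V_i, and g₁,…,g_d smooth real functions with g_i(0) = 0 such that exp(tB) = exp(g₁(t)V₁)···exp(g_d(t)V_d) near t = 0. Then Σ_{i=1}^d g_i''(0) V_i = −Σ_{i=1}^d β_i Σ_{k=1}^{i−1} [V_k, V_i] β_k (the second-order condition). -/
open Matrix NormedSpace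

section Aux

variable {𝔸 : Type*} [NormedRing 𝔸] [NormedAlgebra ℝ 𝔸] [CompleteSpace 𝔸]

/-- Sum of ordered products of pairs from a list. -/
def pairSum {M : Type*} [NonUnitalNonAssocSemiring M] : List M → M
  | [] => 0
  | x :: xs => x * xs.sum + pairSum xs

lemma pairSum_ofFn {M : Type*} [NonUnitalNonAssocSemiring M] :
    ∀ {d : ℕ} (a : Fin d → M),
      pairSum (List.ofFn a) = ∑ i, a i * ∑ j ∈ Finset.Ioi i, a j := by
  intro d
  induction d with
  | zero => intro a; simp [pairSum]
  | succ d ih =>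
    intro a
    rw [List.ofFn_succ, pairSum, List.sum_ofFn, ih, Fin.sum_univ_succ]
    congr 1
    · rw [Fin.Ioi_zero_eq_map, Finset.sum_map]
      rfl
    · refine Finset.sum_congr rfl fun i _ => ?_
      rw [Fin.Ioi_succ, Finset.sum_map]
      rfl

lemma sum_split {M : Type*} [AddCommMonoid M] {d : ℕ} (i : Fin d) (F : Fin d → M) :
    ∑ j, F j = (∑ j ∈ Finset.Iio i, F j) + F i + ∑ j ∈ Finset.Ioi i, F j := by
  classical
  have hu : (Finset.Iio i) ∪ (Finset.Ioi i) = ({i} : Finset (Fin d))ᶜ := by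
    ext j
    simp [lt_or_lt_iff_ne]
  have hdisj : Disjoint (Finset.Iio i) (Finset.Ioi i) :=
    Finset.disjoint_left.2 fun j hj hj' =>
      absurd (Finset.mem_Ioi.1 hj') (not_lt.2 (le_of_lt (Finset.mem_Iio.1 hj)))
  rw [← Finset.sum_add_sum_compl {i} F, Finset.sum_singleton, ← hu,
    Finset.sum_union hdisj]
  abel

/-- Second derivative data for a product of functions all equal to `1` at `0`. -/
lemma prod_deriv2 {ι : Type*} (f f' : ι → ℝ → 𝔸) (a b : ι → 𝔸)
    (hf : ∀ i t, HasDerivAt (f i) (f' i t) t)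
    (hb : ∀ i, HasDerivAt (f' i) (b i) 0)
    (h1 : ∀ i, f i 0 = 1) (ha : ∀ i, f' i 0 = a i) :
    ∀ l : List ι, ∃ D : ℝ → 𝔸,
      (∀ t, HasDerivAt (fun t => (l.map (fun i => f i t)).prod) (D t) t) ∧
      D 0 = (l.map a).sum ∧
      HasDerivAt D ((l.map b).sum + 2 • pairSum (l.map a)) 0 := by
  intro l
  induction l with
  | nil =>
    refine ⟨fun _ => 0, ?_, by simp [pairSum], ?_⟩
    · intro t
      simpa using (hasDerivAt_const t (1 : 𝔸))
    · simpa [pairSum] using (hasDerivAt_const (0 : ℝ) (0 : 𝔸))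
  | cons i l ihl =>
    obtain ⟨D, hD, hD0, hD'⟩ := ihl
    have hQ0 : (l.map (fun i => f i 0)).prod = 1 :=
      List.prod_eq_one (by
        intro x hx
        obtain ⟨j, _, rfl⟩ := List.mem_map.1 hx
        exact h1 j)
    refine ⟨fun t => f' i t * (l.map (fun i => f i t)).prod + f i t * D t, ?_, ?_, ?_⟩
    · intro t
      have := (hf i t).mul (hD t)
      exact this
    · show f' i 0 * (l.map (fun i => f i 0)).prod + f i 0 * D 0 = _
      rw [hQ0, hD0, h1 i, ha i, List.map_cons, List.sum_cons, mul_one, one_mul]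
    · have h2 := ((hb i).mul (hD 0)).add ((hf i 0).mul hD')
      refine h2.congr_deriv ?_
      rw [hQ0, hD0, h1 i, ha i]
      simp only [List.map_cons, List.sum_cons, pairSum, mul_one, one_mul, two_smul]
      abel

/-- The analytic core of the second-order condition, over any real Banach algebra. -/
lemma second_order_core (d : ℕ) (V : Fin d → 𝔸) (β : Fin d → ℝ)
    (B : 𝔸) (hB : B = ∑ i, β i • V i)
    (g : Fin d → ℝ → ℝ) (hsmooth : ∀ i, ContDiff ℝ (⊤ : ℕ∞) (g i)) (h0 : ∀ i, g i 0 = 0)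
    (hβ : ∀ i, deriv (g i) 0 = β i)
    (ε : ℝ) (hε : 0 < ε)
    (heq : ∀ t : ℝ, |t| < ε →
      exp (t • B) = (List.ofFn fun i : Fin d => exp (g i t • V i)).prod) :
    B * B = (∑ i, (deriv (deriv (g i)) 0 • V i + (β i * β i) • (V i * V i)))
      + 2 • ∑ i, (β i • V i) * ∑ j ∈ Finset.Ioi i, β j • V j := by
  have hg : ∀ i t, HasDerivAt (g i) (deriv (g i) t) t := fun i t =>
    (((hsmooth i).differentiable (by simp)) t).hasDerivAt
  have hg' : ∀ i, HasDerivAt (deriv (g i)) (deriv (deriv (g i)) 0) 0 := fun i => by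
    have h2 : ContDiff ℝ ((⊤:ℕ∞) : WithTop ℕ∞) (g i) := (hsmooth i).of_le (by simp)
    have h3 : ContDiff ℝ ((⊤:ℕ∞) : WithTop ℕ∞) (deriv (g i)) := by
      simpa using h2.iterate_deriv 1
    exact ((h3.differentiable (by simp)) 0).hasDerivAt
  have hf : ∀ i t, HasDerivAt (fun u => exp (g i u • V i))
      (deriv (g i) t • (exp (g i t • V i) * V i)) t := by
    intro i t
    have h1 : HasDerivAt (fun u : ℝ => exp (u • V i))
        (exp (g i t • V i) * V i) (g i t) := hasDerivAt_exp_smul_const (V i) (g i t)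
    exact h1.scomp t (hg i t)
  have h1 : ∀ i, exp (g i 0 • V i) = 1 := fun i => by
    rw [h0 i, zero_smul, exp_zero]
  have hfzero : ∀ i, deriv (g i) 0 • (exp (g i 0 • V i) * V i) = β i • V i := fun i => by
    rw [h1 i, one_mul, hβ i]
  have hbder : ∀ i, HasDerivAt (fun t => deriv (g i) t • (exp (g i t • V i) * V i))
      (deriv (deriv (g i)) 0 • V i + (β i * β i) • (V i * V i)) 0 := by
    intro i
    have hinner : HasDerivAt (fun t => exp (g i t • V i) * V i)
        ((deriv (g i) 0 • (exp (g i 0 • V i) * V i)) * V i) 0 :=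
      (hf i 0).mul_const (V i)
    have h2 := (hg' i).smul hinner
    refine h2.congr_deriv ?_
    rw [hfzero i, h1 i, one_mul, hβ i]
    rw [smul_mul_assoc, smul_smul, add_comm]
  obtain ⟨D, hD, hD0, hD'⟩ := prod_deriv2
    (fun i t => exp (g i t • V i))
    (fun i t => deriv (g i) t • (exp (g i t • V i) * V i))
    (fun i => β i • V i)
    (fun i => deriv (deriv (g i)) 0 • V i + (β i * β i) • (V i * V i))
    hf hbder h1 hfzero (List.finRange d)
  have hE : ∀ t : ℝ, HasDerivAt (fun t : ℝ => exp (t • B)) (exp (t • B) * B) t :=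
    fun t => hasDerivAt_exp_smul_const B t
  have hE' : HasDerivAt (fun t : ℝ => exp (t • B) * B) (B * B) 0 := by
    have := (hasDerivAt_exp_smul_const B (0 : ℝ)).mul_const B
    simpa using this
  have hP : ∀ t, HasDerivAt
      (fun t => (List.ofFn fun i : Fin d => exp (g i t • V i)).prod) (D t) t := by
    intro t
    have := hD t
    simpa only [List.ofFn_eq_map] using this
  have hev : (fun t : ℝ => exp (t • B)) =ᶠ[nhds 0]
      (fun t => (List.ofFn fun i : Fin d => exp (g i t • V i)).prod) := by
    filter_upwards [Metric.ball_mem_nhds (0 : ℝ) hε] with t ht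
    exact heq t (by simpa [Real.dist_eq] using ht)
  have hderE : deriv (fun t : ℝ => exp (t • B)) = fun t => exp (t • B) * B :=
    funext fun t => (hE t).deriv
  have hderP : deriv (fun t => (List.ofFn fun i : Fin d => exp (g i t • V i)).prod)
      = D := funext fun t => (hP t).deriv
  have h := hev.deriv.deriv_eq
  rw [hderE, hderP, hE'.deriv, hD'.deriv] at h
  rw [← List.ofFn_eq_map, ← List.ofFn_eq_map, List.sum_ofFn, pairSum_ofFn] at h
  exact h

end Aux

/-- Second-order condition for canonical coordinates of the second kind:
`∑ᵢ gᵢ''(0) Vᵢ = -∑ᵢ βᵢ ∑_{k<i} βₖ [Vₖ, Vᵢ]`. -/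
theorem stmt15 (n d : ℕ) (V : Fin d → Matrix (Fin n) (Fin n) ℝ)
    (hV : LinearIndependent ℝ V) (β : Fin d → ℝ)
    (B : Matrix (Fin n) (Fin n) ℝ) (hB : B = ∑ i, β i • V i)
    (g : Fin d → ℝ → ℝ) (hsmooth : ∀ i, ContDiff ℝ (⊤ : ℕ∞) (g i)) (h0 : ∀ i, g i 0 = 0)
    (ε : ℝ) (hε : 0 < ε)
    (heq : ∀ t : ℝ, |t| < ε →
      exp (t • B) = (List.ofFn fun i : Fin d => exp (g i t • V i)).prod) :
    ∑ i, deriv (deriv (g i)) 0 • V i =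
      -∑ i, β i • ∑ k ∈ Finset.Iio i, β k • ⁅V k, V i⁆ := by
  letI : SeminormedRing (Matrix (Fin n) (Fin n) ℝ) := Matrix.linftyOpSemiNormedRing
  letI : NormedRing (Matrix (Fin n) (Fin n) ℝ) := Matrix.linftyOpNormedRing
  letI : NormedAlgebra ℝ (Matrix (Fin n) (Fin n) ℝ) := Matrix.linftyOpNormedAlgebra
  -- first-order condition `gᵢ'(0) = βᵢ`
  have hg : ∀ i t, HasDerivAt (g i) (deriv (g i) t) t := fun i t =>
    (((hsmooth i).differentiable (by simp)) t).hasDerivAt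
  have hf : ∀ i t, HasDerivAt (fun u => exp (g i u • V i))
      (deriv (g i) t • (exp (g i t • V i) * V i)) t := by
    intro i t
    have h1 : HasDerivAt (fun u : ℝ => exp (u • V i))
        (exp (g i t • V i) * V i) (g i t) := hasDerivAt_exp_smul_const (V i) (g i t)
    exact h1.scomp t (hg i t)
  have h1 : ∀ i, exp (g i 0 • V i) = 1 := fun i => by
    rw [h0 i, zero_smul, exp_zero]
  have hfzero : ∀ i, deriv (g i) 0 • (exp (g i 0 • V i) * V i)
      = deriv (g i) 0 • V i := fun i => by rw [h1 i, one_mul]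
  have hbder : ∀ i, HasDerivAt (fun t => deriv (g i) t • (exp (g i t • V i) * V i))
      (deriv (deriv (g i)) 0 • V i
        + (deriv (g i) 0 * deriv (g i) 0) • (V i * V i)) 0 := by
    intro i
    have hg' : HasDerivAt (deriv (g i)) (deriv (deriv (g i)) 0) 0 := by
      have h2 : ContDiff ℝ ((⊤:ℕ∞) : WithTop ℕ∞) (g i) := (hsmooth i).of_le (by simp)
      have h3 : ContDiff ℝ ((⊤:ℕ∞) : WithTop ℕ∞) (deriv (g i)) := by
        simpa using h2.iterate_deriv 1
      exact ((h3.differentiable (by simp)) 0).hasDerivAt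
    have hinner : HasDerivAt (fun t => exp (g i t • V i) * V i)
        ((deriv (g i) 0 • (exp (g i 0 • V i) * V i)) * V i) 0 :=
      (hf i 0).mul_const (V i)
    have h2 := hg'.smul hinner
    refine h2.congr_deriv ?_
    rw [hfzero i, h1 i, one_mul]
    rw [smul_mul_assoc, smul_smul, add_comm]
  obtain ⟨D, hD, hD0, hD'⟩ := prod_deriv2
    (fun i t => exp (g i t • V i))
    (fun i t => deriv (g i) t • (exp (g i t • V i) * V i))
    (fun i => deriv (g i) 0 • V i)
    (fun i => deriv (deriv (g i)) 0 • V i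
      + (deriv (g i) 0 * deriv (g i) 0) • (V i * V i))
    hf hbder h1 hfzero (List.finRange d)
  have hE : ∀ t : ℝ, HasDerivAt (fun t : ℝ => exp (t • B)) (exp (t • B) * B) t :=
    fun t => hasDerivAt_exp_smul_const B t
  have hP : ∀ t, HasDerivAt
      (fun t => (List.ofFn fun i : Fin d => exp (g i t • V i)).prod) (D t) t := by
    intro t
    have := hD t
    simp only [List.ofFn_eq_map]
    exact this
  have hev : (fun t : ℝ => exp (t • B)) =ᶠ[nhds 0]
      (fun t => (List.ofFn fun i : Fin d => exp (g i t • V i)).prod) := by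
    filter_upwards [Metric.ball_mem_nhds (0 : ℝ) hε] with t ht
    exact heq t (by simpa [Real.dist_eq] using ht)
  have h1st : B = ∑ i, deriv (g i) 0 • V i := by
    have h := hev.deriv_eq
    rw [(hE 0).deriv, (hP 0).deriv] at h
    rw [hD0, ← List.ofFn_eq_map, List.sum_ofFn] at h
    simpa using h
  have hcβ : ∀ i, deriv (g i) 0 = β i := by
    have hz : ∑ i, (deriv (g i) 0 - β i) • V i = 0 := by
      simp only [sub_smul, Finset.sum_sub_distrib, ← h1st, ← hB, sub_self]
    intro i
    have := (Fintype.linearIndependent_iff.1 hV) (fun i => deriv (g i) 0 - β i) hz i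
    linarith [this]
  -- second-order condition
  have h2nd := second_order_core d V β B hB g hsmooth h0 hcβ ε hε heq
  -- pure algebra from here on
  have hBB : B * B = ∑ i, ∑ j, (β i • V i) * (β j • V j) := by
    rw [hB, Finset.sum_mul_sum]
  have hsplit : ∑ i, ∑ j, (β i • V i) * (β j • V j) =
      (∑ i, ∑ j ∈ Finset.Iio i, (β i • V i) * (β j • V j))
        + (∑ i, (β i • V i) * (β i • V i))
        + ∑ i, ∑ j ∈ Finset.Ioi i, (β i • V i) * (β j • V j) := by
    rw [← Finset.sum_add_distrib, ← Finset.sum_add_distrib]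
    exact Finset.sum_congr rfl fun i _ => sum_split i _
  have hexpand : ∑ i, (β i • V i) * ∑ j ∈ Finset.Ioi i, β j • V j
      = ∑ i, ∑ j ∈ Finset.Ioi i, (β i • V i) * (β j • V j) := by
    refine Finset.sum_congr rfl fun i _ => ?_
    rw [Finset.mul_sum]
  have hbsum : ∑ i, (deriv (deriv (g i)) 0 • V i + (β i * β i) • (V i * V i))
      = (∑ i, deriv (deriv (g i)) 0 • V i) + ∑ i, (β i • V i) * (β i • V i) := by
    rw [← Finset.sum_add_distrib]
    refine Finset.sum_congr rfl fun i _ => ?_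
    rw [smul_mul_smul_comm]
  have hswap : ∑ i, ∑ j ∈ Finset.Ioi i, (β i • V i) * (β j • V j)
      = ∑ i, ∑ k ∈ Finset.Iio i, (β k • V k) * (β i • V i) := by
    exact Finset.sum_comm' (by
      intro x y
      simp only [Finset.mem_univ, Finset.mem_Ioi, Finset.mem_Iio, true_and, and_true])
  rw [hBB, hsplit, hbsum, hexpand, hswap, two_smul] at h2nd
  -- now `h2nd : Iio + diag + Swp = (G + diag) + (Swp + Swp)` hence `G = Iio - Swp`
  have key : ∑ i, deriv (deriv (g i)) 0 • V i =
      (∑ i, ∑ k ∈ Finset.Iio i, (β i • V i) * (β k • V k))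
        - ∑ i, ∑ k ∈ Finset.Iio i, (β k • V k) * (β i • V i) := by
    have h3 : (∑ i, deriv (deriv (g i)) 0 • V i) =
        ((∑ i, deriv (deriv (g i)) 0 • V i) + ∑ i, (β i • V i) * (β i • V i)
          + ((∑ i, ∑ k ∈ Finset.Iio i, (β k • V k) * (β i • V i))
            + ∑ i, ∑ k ∈ Finset.Iio i, (β k • V k) * (β i • V i)))
          - (∑ i, (β i • V i) * (β i • V i))
          - (∑ i, ∑ k ∈ Finset.Iio i, (β k • V k) * (β i • V i))
          - (∑ i, ∑ k ∈ Finset.Iio i, (β k • V k) * (β i • V i)) := by abel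
    rw [h3, ← h2nd]
    abel
  rw [key, ← Finset.sum_sub_distrib, neg_eq_iff_eq_neg.symm, ← Finset.sum_neg_distrib]
  refine Finset.sum_congr rfl fun i _ => ?_
  rw [Finset.smul_sum, ← Finset.sum_sub_distrib, ← Finset.sum_neg_distrib]
  refine Finset.sum_congr rfl fun k _ => ?_
  rw [Ring.lie_def, smul_sub, neg_sub, smul_mul_smul_comm, smul_mul_smul_comm,
    smul_sub, smul_smul, smul_smul, mul_comm (β k) (β i)]
end
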